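/- Let ε ∈ [0,1). For every z in the open unit disc 𝔻, the point 4(1−ε)z/(1+z)² lies in ℂ∖[1,∞); consequently the map z ↦ α(4(1−ε)z/(1+z)²), where α(ζ) := ζ/(1+√(1−ζ))² with the principal branch of the square root, is well-defined and holomorphic on 𝔻 with values in 𝔻. -/

import Mathlib

/-!
Put `q = (1 - z)/(1 + z)`. Then `1 - 4(1-ε)z/(1+z)² = ε + (1-ε)q²`, and `Re q > 0` on the disc,
so `q²` lies in the slit plane; since the slit plane is star-shaped about `1`, so does
`1 - 4(1-ε)z/(1+z)²`. On `{ζ | 1 - ζ ∈ slitPlane}` the principal root `s = √(1-ζ)` is holomorphic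
with `Re s > 0`, and `α(ζ) = (1 - s)/(1 + s)` is the Cayley transform of `s`, which lies in `𝔻`.
-/

/-- The map `α(ζ) = ζ/(1+√(1-ζ))²` with the principal branch of the square root. -/
noncomputable def alph (ζ : ℂ) : ℂ := ζ / (1 + (1 - ζ) ^ (1 / 2 : ℂ)) ^ 2

open Complex

namespace Complex

lemma re_cpow_inv_two_pos {x : ℂ} (hx : x ∈ slitPlane) : 0 < (x ^ (2⁻¹ : ℂ)).re := by
  rw [cpow_inv_two_re, Real.sqrt_pos]
  rcases mem_slitPlane_iff.1 hx with hre | him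
  · linarith [norm_nonneg x]
  · linarith [neg_abs_le x.re, abs_re_lt_norm.2 him]

lemma one_add_ne_zero_of_re_pos {s : ℂ} (hs : 0 < s.re) : 1 + s ≠ 0 := by
  intro h
  have h_re := congrArg re h
  simp only [add_re, one_re, zero_re] at h_re
  linarith

lemma norm_one_sub_div_one_add_lt_one {s : ℂ} (hs : 0 < s.re) : ‖(1 - s) / (1 + s)‖ < 1 := by
  have hpos : 0 < ‖1 + s‖ := norm_pos_iff.2 (one_add_ne_zero_of_re_pos hs)
  rw [norm_div, div_lt_one hpos]
  refine lt_of_pow_lt_pow_left₀ 2 (norm_nonneg _) ?_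
  rw [Complex.sq_norm, Complex.sq_norm, normSq_apply, normSq_apply]
  simp only [add_re, add_im, sub_re, sub_im, one_re, one_im]
  nlinarith

lemma re_one_sub_div_one_add_pos {z : ℂ} (hz : ‖z‖ < 1) : 0 < ((1 - z) / (1 + z)).re := by
  have hnormSq : normSq z < 1 := by
    rw [← Complex.sq_norm]
    nlinarith [norm_nonneg z]
  have hpos : 0 < normSq (1 + z) :=
    normSq_pos.2 (slitPlane_ne_zero (mem_slitPlane_of_norm_lt_one hz))
  rw [div_re, ← add_div]
  refine div_pos ?_ hpos
  rw [normSq_apply] at hnormSq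
  simp only [add_re, add_im, sub_re, sub_im, one_re, one_im]
  nlinarith

lemma sq_mem_slitPlane {q : ℂ} (hq : 0 < q.re) : q ^ 2 ∈ slitPlane := by
  rw [mem_slitPlane_iff, sq, mul_re, mul_im]
  rcases eq_or_ne q.im 0 with him | him
  · left
    rw [him]
    nlinarith
  · right
    nlinarith [mul_pos hq hq, mul_self_pos.2 him]

end Complex

lemma one_sub_four_mul_div_one_add_sq_eq (c : ℂ) {z : ℂ} (hz : 1 + z ≠ 0) :
    1 - 4 * (1 - c) * z / (1 + z) ^ 2 = c + (1 - c) * ((1 - z) / (1 + z)) ^ 2 := by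
  field_simp
  ring

lemma one_sub_four_mul_div_one_add_sq_mem_slitPlane {ε : ℝ} (hε : ε ∈ Set.Icc (0 : ℝ) 1) {z : ℂ}
    (hz : ‖z‖ < 1) :
    1 - 4 * (1 - (ε : ℂ)) * z / (1 + z) ^ 2 ∈ slitPlane := by
  have hz1 : 1 + z ≠ 0 := slitPlane_ne_zero (mem_slitPlane_of_norm_lt_one hz)
  have hq := sq_mem_slitPlane (re_one_sub_div_one_add_pos hz)
  have := starConvex_one_slitPlane hq hε.1 (sub_nonneg.2 hε.2) (add_sub_cancel ε 1)
  simpa [one_sub_four_mul_div_one_add_sq_eq _ hz1] using this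

section alph

variable {ζ : ℂ} (h : 1 - ζ ∈ slitPlane)
include h

lemma re_one_sub_cpow_one_div_two_pos : 0 < ((1 - ζ) ^ (1 / 2 : ℂ)).re := by
  simpa only [one_div] using re_cpow_inv_two_pos h

lemma alph_eq_of_one_sub_mem_slitPlane :
    alph ζ = (1 - (1 - ζ) ^ (1 / 2 : ℂ)) / (1 + (1 - ζ) ^ (1 / 2 : ℂ)) := by
  have hne := one_add_ne_zero_of_re_pos (re_one_sub_cpow_one_div_two_pos h)
  have hsq : ((1 - ζ) ^ (1 / 2 : ℂ)) ^ 2 = 1 - ζ := by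
    simpa only [one_div] using cpow_ofNat_inv_pow (1 - ζ) 2
  rw [alph, div_eq_div_iff (pow_ne_zero 2 hne) hne]
  linear_combination (1 + (1 - ζ) ^ (1 / 2 : ℂ)) * hsq

lemma norm_alph_lt_one : ‖alph ζ‖ < 1 := by
  rw [alph_eq_of_one_sub_mem_slitPlane h]
  exact norm_one_sub_div_one_add_lt_one (re_one_sub_cpow_one_div_two_pos h)

lemma differentiableAt_alph : DifferentiableAt ℂ alph ζ := by
  have hne := one_add_ne_zero_of_re_pos (re_one_sub_cpow_one_div_two_pos h)
  have hsqrt : DifferentiableAt ℂ (fun ζ : ℂ => (1 - ζ) ^ (1 / 2 : ℂ)) ζ :=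
    ((differentiableAt_const _).sub differentiableAt_id).cpow_const h
  exact differentiableAt_id.div (((differentiableAt_const _).add hsqrt).pow 2)
    (pow_ne_zero 2 hne)

end alph

theorem stmt18 (ε : ℝ) (hε : ε ∈ Set.Ico (0 : ℝ) 1) :
    (∀ z ∈ Metric.ball (0 : ℂ) 1, ∀ x : ℝ, 1 ≤ x →
      4 * (1 - (ε : ℂ)) * z / (1 + z) ^ 2 ≠ (x : ℂ)) ∧
    DifferentiableOn ℂ (fun z : ℂ => alph (4 * (1 - (ε : ℂ)) * z / (1 + z) ^ 2))
      (Metric.ball 0 1) ∧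
    Set.MapsTo (fun z : ℂ => alph (4 * (1 - (ε : ℂ)) * z / (1 + z) ^ 2))
      (Metric.ball 0 1) (Metric.ball 0 1) := by
  have hslit : ∀ z ∈ Metric.ball (0 : ℂ) 1, 1 - 4 * (1 - (ε : ℂ)) * z / (1 + z) ^ 2 ∈ slitPlane :=
    fun z hz => one_sub_four_mul_div_one_add_sq_mem_slitPlane (Set.Ico_subset_Icc_self hε)
      (mem_ball_zero_iff.1 hz)
  refine ⟨fun z hz x hx hzx => ?_, fun z hz => ?_, fun z hz => ?_⟩
  · have hx_slit := hslit z hz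
    rw [hzx, ← ofReal_one, ← ofReal_sub, ofReal_mem_slitPlane] at hx_slit
    linarith
  · have hz1 : 1 + z ≠ 0 :=
      slitPlane_ne_zero (mem_slitPlane_of_norm_lt_one (mem_ball_zero_iff.1 hz))
    have hw : DifferentiableAt ℂ (fun z : ℂ => 4 * (1 - (ε : ℂ)) * z / (1 + z) ^ 2) z :=
      (differentiableAt_id.const_mul _).div
        ((differentiableAt_const _).add differentiableAt_id |>.pow 2) (pow_ne_zero 2 hz1)
    exact ((differentiableAt_alph (hslit z hz)).comp z hw).differentiableWithinAt
  · exact mem_ball_zero_iff.2 (norm_alph_lt_one (hslit z hz))
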